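/- For r ≥ 1, μ > 0, 1 ≤ s < ∞, and N₁ ≥ 1, the function f₁(t) = 3^{−μ} N₁^{−μ−1/s} Σ_{k=N₁+r}^{2N₁+r−1} T_k(t) satisfies ‖f₁^{(r)}‖_{2,ω}² ≥ 2^{2r} 3^{−2μ} (c*)² N₁^{−2μ + 4r − 2/s + 1} for a constant c* > 0 depending only on r, where f₁^{(r)} is expanded in the orthonormal Chebyshev basis using B_k^r = c* k^{2r−2}. -/

import Mathlib

open Real

noncomputable def chebT (k : ℕ) : ℝ → ℝ := fun t => (Polynomial.Chebyshev.T ℝ k).eval t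

noncomputable def Torth (k : ℕ) : ℝ → ℝ :=
  fun t => (if k = 0 then Real.sqrt π⁻¹ else Real.sqrt (2 / π)) * chebT k t

noncomputable def w (t : ℝ) : ℝ := (1 - t ^ 2) ^ (-(1:ℝ)/2)

noncomputable def chebCoeff (f : ℝ → ℝ) (k : ℕ) : ℝ :=
  ∫ t in (-1:ℝ)..1, w t * f t * Torth k t

noncomputable def normC (g : ℝ → ℝ) : ℝ := ⨆ t : Set.Icc (-1:ℝ) 1, |g t|

noncomputable def normL2 (g : ℝ → ℝ) : ℝ := Real.sqrt (∫ t in (-1:ℝ)..1, w t * (g t) ^ 2)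

noncomputable def normW (s μ : ℝ) (f : ℝ → ℝ) : ℝ :=
  (∑' k : ℕ, (max 1 (k:ℝ)) ^ (s*μ) * |chebCoeff f k| ^ s) ^ (1/s)

noncomputable def chebDeriv (r : ℕ) (f : ℝ → ℝ) : ℝ → ℝ :=
  fun t => ∑' k : ℕ, chebCoeff f k * iteratedDeriv r (Torth k) t

open ENNReal in
noncomputable def seqLpNorm (p : ℝ≥0∞) (ξ : ℕ → ℝ) : ℝ :=
  if p = ⊤ then ⨆ k, |ξ k| else (∑' k, |ξ k| ^ p.toReal) ^ (1 / p.toReal)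

/-!
Let `q` be the `r`-th derivative of `f₁`; it is a polynomial lying in the span of
`T_0, …, T_n` with `n + 1 = 2N₁ + r`. Writing `q = ∑ bⱼ Tⱼ`, orthogonality gives
`∫ q² ω ≥ (π/2) ∑ bⱼ²`, while `q(1) = ∑ bⱼ` because `Tⱼ(1) = 1`, so by Cauchy–Schwarz
`(π/2) q(1)² ≤ (n + 1) ∫ q² ω`. Each of the `N₁` indices `k ≥ N₁ + r` contributes
`T_k^{(r)}(1) = ∏_{l<r} (k² - l²)/(2l + 1) ≥ N₁^{2r} / ∏_{l<r} (2l + 1)`, hence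
`q(1) ≳ N₁^{2r+1}` and `∫ q² ω ≳ N₁^{4r+1}`.
-/

open Polynomial Polynomial.Chebyshev MeasureTheory

lemma normL2_sq_eq_integral_measureT (g : ℝ → ℝ) :
    normL2 g ^ 2 = ∫ x, g x ^ 2 ∂measureT := by
  have hw : ∀ x ∈ Set.Icc (-1 : ℝ) 1, w x = √(1 - x ^ 2)⁻¹ := fun x hx => by
    rw [w, neg_div, Real.rpow_neg (by nlinarith [hx.1, hx.2]), Real.sqrt_inv, Real.sqrt_eq_rpow,
      one_div]
  rw [normL2, Real.sq_sqrt, integral_measureT]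
  · refine intervalIntegral.integral_congr fun x hx => ?_
    rw [Set.uIcc_of_le (by norm_num)] at hx
    simp only [hw x hx, mul_comm]
  · refine intervalIntegral.integral_nonneg (by norm_num) fun x hx => ?_
    rw [hw x hx]
    positivity

lemma pi_div_two_le_integral_T_mul_self_measureT (n : ℕ) :
    π / 2 ≤ ∫ x, (T ℝ n).eval x * (T ℝ n).eval x ∂measureT := by
  rcases eq_or_ne n 0 with rfl | hn
  · rw [Nat.cast_zero, integral_eval_T_real_mul_self_measureT_zero]
    linarith [pi_pos]
  · rw [integral_T_real_mul_self_measureT_of_ne_zero hn]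

lemma integral_sq_sum_T_measureT {n : ℕ} (c : Fin n → ℝ) :
    ∫ x, (∑ i, c i * (T ℝ i).eval x) ^ 2 ∂measureT
      = ∑ i, c i ^ 2 * ∫ x, (T ℝ i).eval x * (T ℝ i).eval x ∂measureT := by
  have hint : ∀ i j : Fin n, Integrable
      (fun x => c i * (T ℝ i).eval x * (c j * (T ℝ j).eval x)) measureT :=
    fun i j => integrable_measureT (by fun_prop)
  simp_rw [sq, Finset.sum_mul_sum]
  rw [integral_finsetSum _ fun i _ => integrable_finsetSum _ fun j _ => hint i j]
  refine Finset.sum_congr rfl fun i _ => ?_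
  rw [integral_finsetSum _ fun j _ => hint i j, Finset.sum_eq_single i]
  · rw [← integral_const_mul]
    congr 1 with x
    ring
  · intro j _ hji
    simp_rw [mul_mul_mul_comm, integral_const_mul,
      integral_eval_T_real_mul_eval_T_real_measureT_of_ne (Fin.val_injective.ne hji.symm), mul_zero]
  · simp

lemma sq_eval_one_le_integral_measureT {n : ℕ} {p : ℝ[X]}
    (hp : p ∈ Submodule.span ℝ (Set.range fun i : Fin (n + 1) => T ℝ i)) :
    π / 2 * p.eval 1 ^ 2 ≤ (n + 1) * ∫ x, p.eval x ^ 2 ∂measureT := by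
  obtain ⟨c, rfl⟩ := (Submodule.mem_span_range_iff_exists_fun ℝ).1 hp
  simp only [eval_finsetSum, eval_smul, smul_eq_mul, T_eval_one, mul_one,
    integral_sq_sum_T_measureT]
  calc π / 2 * (∑ i, c i) ^ 2 ≤ π / 2 * ((n + 1) * ∑ i, c i ^ 2) := by
        gcongr
        simpa using sq_sum_le_card_mul_sum_sq (s := Finset.univ) (f := c)
    _ = (n + 1) * ∑ i, c i ^ 2 * (π / 2) := by rw [← Finset.sum_mul]; ring
    _ ≤ (n + 1) * ∑ i, c i ^ 2 * ∫ x, (T ℝ i).eval x * (T ℝ i).eval x ∂measureT := by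
        gcongr with i
        exact pi_div_two_le_integral_T_mul_self_measureT i

lemma iterate_derivative_T_mem_span_T {k n : ℕ} (hk : k ≤ n) (r : ℕ) :
    derivative^[r] (T ℝ k) ∈ Submodule.span ℝ (Set.range fun i : Fin (n + 1) => T ℝ i) := by
  have hsub : (fun m : ℕ => T ℝ m) '' Set.Icc 0 (k - r)
      ⊆ Set.range fun i : Fin (n + 1) => T ℝ i := by
    rintro _ ⟨m, hm, rfl⟩
    exact ⟨⟨m, by grind⟩, rfl⟩
  exact Submodule.span_le_restrictScalars ℕ ℝ _
    (Submodule.span_mono hsub (T_iterate_derivative_mem_span_T (R := ℝ) k r))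

lemma pow_div_le_iterate_derivative_T_eval_one {N r k : ℕ} (hk : N + r ≤ k) :
    (N : ℝ) ^ (2 * r) / ∏ l ∈ Finset.range r, (2 * l + 1 : ℝ)
      ≤ (derivative^[r] (T ℝ k)).eval 1 := by
  rw [iterate_derivative_T_eval_one_eq_div]
  push_cast
  gcongr
  rw [pow_mul, show ((N : ℝ) ^ 2) ^ r = ∏ _l ∈ Finset.range r, (N : ℝ) ^ 2 by simp]
  refine Finset.prod_le_prod (fun _ _ => by positivity) fun l hl => ?_
  have hl : (l : ℝ) + N + 1 ≤ k := by
    have := Finset.mem_range.1 hl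
    exact_mod_cast (by omega : l + N + 1 ≤ k)
  nlinarith

lemma iteratedDeriv_eval (p : ℝ[X]) (r : ℕ) :
    iteratedDeriv r (fun x => p.eval x) = fun x => (derivative^[r] p).eval x := by
  induction r generalizing p with
  | zero => rfl
  | succ r ih =>
    rw [iteratedDeriv_succ', Function.iterate_succ_apply, ← ih]
    congr 1 with x
    exact Polynomial.deriv p

lemma iteratedDeriv_const_mul_sum_Torth (r : ℕ) (c : ℝ) {s : Finset ℕ} (hs : 0 ∉ s) :
    (iteratedDeriv r fun t => c * ∑ k ∈ s, Torth k t)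
      = fun t => c * √(2 / π) * (derivative^[r] (∑ k ∈ s, T ℝ k)).eval t := by
  have hf : (fun t => c * ∑ k ∈ s, Torth k t)
      = fun t => c * √(2 / π) * (∑ k ∈ s, T ℝ k).eval t := by
    ext t
    rw [eval_finsetSum, mul_assoc, Finset.mul_sum _ _ √(2 / π)]
    congr 1
    refine Finset.sum_congr rfl fun k hk => ?_
    rw [Torth, chebT, if_neg (ne_of_mem_of_not_mem hk hs)]
  ext t
  rw [hf, iteratedDeriv_const_mul_field, iteratedDeriv_eval]

lemma mul_pow_div_le_iterate_derivative_sum_T_eval_one (r : ℕ) {N : ℕ} (hN : 1 ≤ N) :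
    N * ((N : ℝ) ^ (2 * r) / ∏ l ∈ Finset.range r, (2 * l + 1 : ℝ))
      ≤ (derivative^[r] (∑ k ∈ Finset.Icc (N + r) (2 * N + r - 1), T ℝ k)).eval 1 := by
  rw [iterate_derivative_sum, eval_finsetSum]
  have := Finset.card_nsmul_le_sum (Finset.Icc (N + r) (2 * N + r - 1)) _ _ fun k hk =>
    pow_div_le_iterate_derivative_T_eval_one (r := r) (Finset.mem_Icc.1 hk).1
  rwa [Nat.card_Icc, show 2 * N + r - 1 + 1 - (N + r) = N by omega, nsmul_eq_mul] at this

lemma le_normL2_iteratedDeriv_const_mul_sum_Torth_sq (r : ℕ) {N : ℕ} (hN : 1 ≤ N) (c : ℝ) :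
    c ^ 2 * (N : ℝ) ^ (4 * r + 1) / ((r + 2) * (∏ l ∈ Finset.range r, (2 * l + 1 : ℝ)) ^ 2)
      ≤ normL2 (iteratedDeriv r fun t =>
          c * ∑ k ∈ Finset.Icc (N + r) (2 * N + r - 1), Torth k t) ^ 2 := by
  set n := 2 * N + r - 1
  set q := derivative^[r] (∑ k ∈ Finset.Icc (N + r) n, T ℝ k) with hq_def
  set B := (N : ℝ) ^ (2 * r) / ∏ l ∈ Finset.range r, (2 * l + 1 : ℝ) with hB_def
  have hq : π / 2 * q.eval 1 ^ 2 ≤ (n + 1) * ∫ x, q.eval x ^ 2 ∂measureT := by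
    refine sq_eval_one_le_integral_measureT ?_
    rw [hq_def, iterate_derivative_sum]
    exact Submodule.sum_mem _ fun k hk =>
      iterate_derivative_T_mem_span_T (Finset.mem_Icc.1 hk).2 r
  have hq1 : N * B ≤ q.eval 1 := mul_pow_div_le_iterate_derivative_sum_T_eval_one r hN
  have hn : (n : ℝ) + 1 ≤ (r + 2) * N := by
    have : n + 1 ≤ (r + 2) * N := by
      have := Nat.le_mul_of_pos_right r hN
      rw [add_mul]
      omega
    exact_mod_cast this
  rw [iteratedDeriv_const_mul_sum_Torth r c (by simp only [Finset.mem_Icc]; omega),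
    normL2_sq_eq_integral_measureT]
  simp_rw [mul_pow, integral_const_mul, Real.sq_sqrt (by positivity : (0 : ℝ) ≤ 2 / π)]
  rw [mul_div_assoc, mul_assoc]
  gcongr
  calc (N : ℝ) ^ (4 * r + 1) / ((r + 2) * (∏ l ∈ Finset.range r, (2 * l + 1 : ℝ)) ^ 2)
      = (N * B) ^ 2 / ((r + 2) * N) := by
        rw [hB_def]
        field_simp
        ring
    _ ≤ q.eval 1 ^ 2 / (n + 1) := by gcongr
    _ ≤ 2 / π * ∫ x, q.eval x ^ 2 ∂measureT := by
        rw [div_le_iff₀ (by positivity)]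
        have hπ : 0 < π := pi_pos
        field_simp
        linarith

theorem stmt17_general (r : ℕ) :
    ∃ cstar > 0, ∀ (μ s : ℝ) (N₁ : ℕ), 0 < μ → 1 ≤ s → 1 ≤ N₁ →
      (normL2 (iteratedDeriv r (fun t =>
          (3:ℝ) ^ (-μ) * (N₁:ℝ) ^ (-μ - 1/s) *
            ∑ k ∈ Finset.Icc (N₁ + r) (2*N₁ + r - 1), Torth k t))) ^ 2
        ≥ (2:ℝ) ^ (2*r) * (3:ℝ) ^ (-2*μ) * cstar ^ 2 *
            (N₁:ℝ) ^ (-2*μ + 4*(r:ℝ) - 2/s + 1) := by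
  refine ⟨(2 ^ r * (∏ l ∈ Finset.range r, (2 * l + 1 : ℝ)) * √(r + 2))⁻¹, by positivity,
    fun μ s N _ _ hN => ?_⟩
  refine le_trans (le_of_eq ?_) (le_normL2_iteratedDeriv_const_mul_sum_Torth_sq r hN _)
  have hN0 : (0 : ℝ) < N := by exact_mod_cast hN
  have h3 : (3 : ℝ) ^ (-2 * μ) = ((3 : ℝ) ^ (-μ)) ^ 2 := by
    rw [← Real.rpow_natCast, ← Real.rpow_mul (by norm_num)]
    ring_nf
  have hNexp : (N : ℝ) ^ (-2 * μ + 4 * (r : ℝ) - 2 / s + 1)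
      = ((N : ℝ) ^ (-μ - 1 / s)) ^ 2 * (N : ℝ) ^ (4 * r + 1) := by
    rw [← Real.rpow_natCast, ← Real.rpow_mul hN0.le, ← Real.rpow_natCast, ← Real.rpow_add hN0]
    push_cast
    ring_nf
  rw [h3, hNexp, mul_pow, inv_pow, mul_pow, mul_pow, Real.sq_sqrt (by positivity)]
  field_simp
  ring

/-- lower bound on the L_{2,ω}-norm of the r-th derivative of f₁,
with a constant c* depending only on r. -/
theorem stmt17 (r : ℕ) (hr : 1 ≤ r) :
    ∃ cstar > 0, ∀ (μ s : ℝ) (N₁ : ℕ), 0 < μ → 1 ≤ s → 1 ≤ N₁ →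
      (normL2 (iteratedDeriv r (fun t =>
          (3:ℝ) ^ (-μ) * (N₁:ℝ) ^ (-μ - 1/s) *
            ∑ k ∈ Finset.Icc (N₁ + r) (2*N₁ + r - 1), Torth k t))) ^ 2
        ≥ (2:ℝ) ^ (2*r) * (3:ℝ) ^ (-2*μ) * cstar ^ 2 *
            (N₁:ℝ) ^ (-2*μ + 4*(r:ℝ) - 2/s + 1) :=
  stmt17_general r
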